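/- arXiv:2202.08642 — 2 statements merged into one kernel-verified Lean document; each statement's English description precedes it below -/
import Mathlib

section
/- Let V₁, V₂ be (m−1)-dimensional subspaces of Lⁿ with dim(V₁ ∩ V₂) ≥ m−2, and let x ∈ Lⁿ be nonzero. Then dist(x, V₂) ≤ dist(x, V₁) + dist(V₁, V₂) when L ⊆ ℂ. -/
/-!
For nonzero `y` the projective distance satisfies the triangle inequality `dist(x,z) ≤ dist(x,y) +
dist(y,z)`: for unit vectors `dist(x,y) = ‖x - ⟪y,x⟫ y‖`, and the projection onto `zᗮ` is
1-Lipschitz. Hence it suffices to move every nonzero `y₁ ∈ V₁` to a nonzero `y₂ ∈ V₂` with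
`dist(y₁,y₂) ≤ dist(V₁,V₂)`.

If `W = V₁ ∩ V₂` has codimension one in both, write `Vᵢ = W ⊕ 𝕜 uᵢ` with unit vectors `uᵢ ⊥ W`,
the phase of `u₂` chosen so that `t = ⟪u₁,u₂⟫ ≥ 0`. In the orthonormal bases `(w, uᵢ)`, with `w`
an orthonormal basis of `W`, the Gram matrix of `V₁` against `V₂` is `diag(1,…,1,t)`, so
`dist(V₁,V₂) = √(1 - t²)`; this does not depend on the bases, since changing them by matrices
`A`, `B` multiplies the Gram determinant `⟪X, Y⟫` by `conj (det A) · det B`.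
Now `y₁ = v + c u₁` with `v ∈ W` is matched with `y₂ = v + c u₂`: both have squared norm
`a + b = ‖v‖² + |c|²` and `⟪y₁,y₂⟫ = a + b t ≥ t (a + b)`, so `dist(y₁,y₂) ≤ √(1 - t²)`.
-/

/-- The Gram determinant `det (⟪x i, y j⟫)` of two `m`-tuples of vectors.
For pure wedge products `X = x₁ ∧ ⋯ ∧ xₘ` and `Y = y₁ ∧ ⋯ ∧ yₘ` this is the
inner product `⟪X, Y⟫` in `⋀ᵐ U`, for the inner product on `⋀ᵐ U` making
wedge products of orthonormal vectors orthonormal. -/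
noncomputable def gramDet (𝕜 : Type*) [RCLike 𝕜] {E : Type*} [NormedAddCommGroup E]
    [InnerProductSpace 𝕜 E] {m : ℕ} (x y : Fin m → E) : 𝕜 :=
  Matrix.det (Matrix.of fun i j => (inner 𝕜 (x i) (y j) : 𝕜))

/-- The norm `‖x₁ ∧ ⋯ ∧ xₘ‖` of a pure wedge product, computed as the square
root of the Gram determinant. -/
noncomputable def wedgeNorm (𝕜 : Type*) [RCLike 𝕜] {E : Type*} [NormedAddCommGroup E]
    [InnerProductSpace 𝕜 E] {m : ℕ} (x : Fin m → E) : ℝ :=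
  Real.sqrt (RCLike.re (gramDet 𝕜 x x))

/-- The projective distance `dist(x,y) = ‖x ∧ y‖ / (‖x‖ ‖y‖)` between two
nonzero vectors. -/
noncomputable def pdist (𝕜 : Type*) [RCLike 𝕜] {E : Type*} [NormedAddCommGroup E]
    [InnerProductSpace 𝕜 E] (x y : E) : ℝ :=
  wedgeNorm 𝕜 ![x, y] / (‖x‖ * ‖y‖)

/-- The projective distance between the lines spanned by the pure wedge products
`x₁ ∧ ⋯ ∧ xₘ` and `y₁ ∧ ⋯ ∧ yₘ` in `⋀ᵐ U`:
`dist(X,Y) = ‖X ∧ Y‖/(‖X‖‖Y‖) = √(‖X‖²‖Y‖² − |⟪X,Y⟫|²)/(‖X‖‖Y‖)`.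
When `x`, `y` are bases of `m`-dimensional subspaces `V₁`, `V₂`, this is the
projective distance `dist(V₁,V₂)` (it does not depend on the chosen bases). -/
noncomputable def pdistT (𝕜 : Type*) [RCLike 𝕜] {E : Type*} [NormedAddCommGroup E]
    [InnerProductSpace 𝕜 E] {m : ℕ} (x y : Fin m → E) : ℝ :=
  Real.sqrt (RCLike.re (gramDet 𝕜 x x) * RCLike.re (gramDet 𝕜 y y)
      - ‖gramDet 𝕜 x y‖ ^ 2) / (wedgeNorm 𝕜 x * wedgeNorm 𝕜 y)

/-- The distance `dist(x, V)` from a nonzero point to a subspace: the infimum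
(in fact minimum) of `dist(x,y)` over nonzero `y ∈ V`. -/
noncomputable def pdistPV (𝕜 : Type*) [RCLike 𝕜] {E : Type*} [NormedAddCommGroup E]
    [InnerProductSpace 𝕜 E] (x : E) (V : Submodule 𝕜 E) : ℝ :=
  sInf {d : ℝ | ∃ y ∈ V, y ≠ 0 ∧ d = pdist 𝕜 x y}

open scoped InnerProductSpace Matrix

section

variable {𝕜 : Type*} [RCLike 𝕜] {E : Type*} [NormedAddCommGroup E] [InnerProductSpace 𝕜 E]

open Module Submodule

lemma gramDet_pair (x y : E) :
    gramDet 𝕜 ![x, y] ![x, y] = ((‖x‖ ^ 2 * ‖y‖ ^ 2 - ‖⟪x, y⟫_𝕜‖ ^ 2 : ℝ) : 𝕜) := by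
  rw [gramDet, Matrix.det_fin_two]
  simp only [Matrix.of_apply, Matrix.cons_val_zero, Matrix.cons_val_one]
  rw [← inner_conj_symm y x, inner_self_eq_norm_sq_to_K, inner_self_eq_norm_sq_to_K,
    RCLike.mul_conj]
  push_cast
  ring

lemma pdist_eq (x y : E) :
    pdist 𝕜 x y = √(‖x‖ ^ 2 * ‖y‖ ^ 2 - ‖⟪x, y⟫_𝕜‖ ^ 2) / (‖x‖ * ‖y‖) := by
  rw [pdist, wedgeNorm, gramDet_pair, RCLike.ofReal_re]

lemma pdist_nonneg (x y : E) : 0 ≤ pdist 𝕜 x y := by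
  rw [pdist_eq]
  positivity

lemma pdist_comm (x y : E) : pdist 𝕜 x y = pdist 𝕜 y x := by
  rw [pdist_eq, pdist_eq, ← inner_conj_symm x y, RCLike.norm_conj, mul_comm (‖y‖ ^ 2),
    mul_comm ‖y‖]

@[simp]
lemma pdist_zero_left (y : E) : pdist 𝕜 0 y = 0 := by
  simp [pdist_eq]

@[simp]
lemma pdist_zero_right (x : E) : pdist 𝕜 x 0 = 0 := by
  simp [pdist_eq]

@[simp]
lemma pdist_self (x : E) : pdist 𝕜 x x = 0 := by
  rw [pdist_eq, inner_self_eq_norm_sq_to_K, norm_pow, RCLike.norm_ofReal, abs_norm, ← sq,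
    sub_self, Real.sqrt_zero, zero_div]

lemma pdist_smul_left {c : 𝕜} (hc : c ≠ 0) (x y : E) : pdist 𝕜 (c • x) y = pdist 𝕜 x y := by
  have hc' : 0 < ‖c‖ := norm_pos_iff.2 hc
  rw [pdist_eq, pdist_eq, inner_smul_left, norm_mul, norm_smul, RCLike.norm_conj,
    show (‖c‖ * ‖x‖) ^ 2 * ‖y‖ ^ 2 - (‖c‖ * ‖⟪x, y⟫_𝕜‖) ^ 2
      = ‖c‖ ^ 2 * (‖x‖ ^ 2 * ‖y‖ ^ 2 - ‖⟪x, y⟫_𝕜‖ ^ 2) by ring,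
    Real.sqrt_mul (by positivity), Real.sqrt_sq hc'.le, mul_assoc,
    mul_div_mul_left _ _ hc'.ne']

lemma pdist_smul_right {c : 𝕜} (hc : c ≠ 0) (x y : E) : pdist 𝕜 x (c • y) = pdist 𝕜 x y := by
  rw [pdist_comm, pdist_smul_left hc, pdist_comm]

lemma pdist_eq_norm_sub_of_norm_eq_one {x y : E} (hx : ‖x‖ = 1) (hy : ‖y‖ = 1) :
    pdist 𝕜 x y = ‖x - ⟪y, x⟫_𝕜 • y‖ := by
  have h : ‖x - ⟪y, x⟫_𝕜 • y‖ ^ 2 = 1 - ‖⟪x, y⟫_𝕜‖ ^ 2 := by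
    rw [@norm_sub_sq 𝕜, inner_smul_right, ← inner_conj_symm x y, RCLike.mul_conj,
      norm_smul, RCLike.norm_conj, ← RCLike.ofReal_pow, RCLike.ofReal_re, hx, hy]
    ring
  rw [pdist_eq, hx, hy, one_pow, one_mul, div_one, ← h,
    Real.sqrt_sq (norm_nonneg _)]

lemma norm_sub_inner_smul_le {z : E} (hz : ‖z‖ = 1) (v : E) : ‖v - ⟪z, v⟫_𝕜 • z‖ ≤ ‖v‖ := by
  have h : ‖v - ⟪z, v⟫_𝕜 • z‖ ^ 2 = ‖v‖ ^ 2 - ‖⟪z, v⟫_𝕜‖ ^ 2 := by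
    rw [@norm_sub_sq 𝕜, inner_smul_right, ← inner_conj_symm z v, RCLike.conj_mul,
      norm_smul, RCLike.norm_conj, ← RCLike.ofReal_pow, RCLike.ofReal_re, hz]
    ring
  exact (pow_le_pow_iff_left₀ (norm_nonneg _) (norm_nonneg _) two_ne_zero).1
    (by rw [h]; linarith [sq_nonneg ‖⟪z, v⟫_𝕜‖])

lemma pdist_triangle_of_norm_eq_one {x y z : E} (hx : ‖x‖ = 1) (hy : ‖y‖ = 1) (hz : ‖z‖ = 1) :
    pdist 𝕜 x z ≤ pdist 𝕜 x y + pdist 𝕜 y z := by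
  set α := ⟪y, x⟫_𝕜
  have hα : ‖α‖ ≤ 1 := by simpa [hx, hy] using norm_inner_le_norm (𝕜 := 𝕜) y x
  -- project `x = (x - α y) + α y` onto `zᗮ`
  have hsplit : x - ⟪z, x⟫_𝕜 • z =
      ((x - α • y) - ⟪z, x - α • y⟫_𝕜 • z) + α • (y - ⟪z, y⟫_𝕜 • z) := by
    rw [inner_sub_right, inner_smul_right]
    module
  calc pdist 𝕜 x z = ‖x - ⟪z, x⟫_𝕜 • z‖ := pdist_eq_norm_sub_of_norm_eq_one hx hz
    _ ≤ ‖(x - α • y) - ⟪z, x - α • y⟫_𝕜 • z‖ + ‖α • (y - ⟪z, y⟫_𝕜 • z)‖ :=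
        hsplit ▸ norm_add_le _ _
    _ ≤ ‖x - α • y‖ + 1 * ‖y - ⟪z, y⟫_𝕜 • z‖ := by
        rw [norm_smul]
        gcongr
        exact norm_sub_inner_smul_le hz _
    _ = pdist 𝕜 x y + pdist 𝕜 y z := by
        rw [one_mul, pdist_eq_norm_sub_of_norm_eq_one hx hy,
          pdist_eq_norm_sub_of_norm_eq_one hy hz]

lemma pdist_triangle (x z : E) {y : E} (hy : y ≠ 0) :
    pdist 𝕜 x z ≤ pdist 𝕜 x y + pdist 𝕜 y z := by
  rcases eq_or_ne x 0 with rfl | hx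
  · simpa using pdist_nonneg y z
  rcases eq_or_ne z 0 with rfl | hz
  · simpa using pdist_nonneg x y
  have hinv : ∀ {v : E}, v ≠ 0 → (‖v‖⁻¹ : 𝕜) ≠ 0 := fun hv => by simpa using hv
  have h := pdist_triangle_of_norm_eq_one (𝕜 := 𝕜) (norm_smul_inv_norm (𝕜 := 𝕜) hx)
    (norm_smul_inv_norm (𝕜 := 𝕜) hy) (norm_smul_inv_norm (𝕜 := 𝕜) hz)
  rwa [pdist_smul_left (hinv hx), pdist_smul_left (hinv hx), pdist_smul_left (hinv hy),
    pdist_smul_right (hinv hy), pdist_smul_right (hinv hz), pdist_smul_right (hinv hz)] at h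

section Gram

variable {m : ℕ}

lemma gramDet_sum_smul (A B : Matrix (Fin m) (Fin m) 𝕜) (x y : Fin m → E) :
    gramDet 𝕜 (fun i => ∑ l, A i l • x l) (fun j => ∑ l, B j l • y l)
      = starRingEnd 𝕜 A.det * B.det * gramDet 𝕜 x y := by
  have hM : (Matrix.of fun i j => ⟪∑ l, A i l • x l, ∑ l, B j l • y l⟫_𝕜)
      = A.map (starRingEnd 𝕜) * Matrix.of (fun i j => ⟪x i, y j⟫_𝕜) * Bᵀ := by
    ext i j
    simp only [Matrix.mul_apply, Matrix.of_apply, Matrix.map_apply, Matrix.transpose_apply,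
      sum_inner, inner_smul_left, inner_sum, inner_smul_right, Finset.mul_sum, Finset.sum_mul]
    exact Finset.sum_congr rfl fun _ _ => Finset.sum_congr rfl fun _ _ => by ring
  have hdet : (A.map (starRingEnd 𝕜)).det = starRingEnd 𝕜 A.det :=
    ((starRingEnd 𝕜).map_det A).symm
  rw [gramDet, gramDet, hM, Matrix.det_mul, Matrix.det_mul, Matrix.det_transpose, hdet]
  ring

lemma re_gramDet_sum_smul_self (A : Matrix (Fin m) (Fin m) 𝕜) (x : Fin m → E) :
    RCLike.re (gramDet 𝕜 (fun i => ∑ l, A i l • x l) (fun i => ∑ l, A i l • x l))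
      = ‖A.det‖ ^ 2 * RCLike.re (gramDet 𝕜 x x) := by
  rw [gramDet_sum_smul, RCLike.conj_mul, ← RCLike.ofReal_pow, RCLike.re_ofReal_mul]

lemma wedgeNorm_sum_smul (A : Matrix (Fin m) (Fin m) 𝕜) (x : Fin m → E) :
    wedgeNorm 𝕜 (fun i => ∑ l, A i l • x l) = ‖A.det‖ * wedgeNorm 𝕜 x := by
  rw [wedgeNorm, wedgeNorm, re_gramDet_sum_smul_self, Real.sqrt_mul (by positivity),
    Real.sqrt_sq (norm_nonneg _)]

lemma pdistT_sum_smul {A B : Matrix (Fin m) (Fin m) 𝕜} (hA : A.det ≠ 0) (hB : B.det ≠ 0)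
    (x y : Fin m → E) :
    pdistT 𝕜 (fun i => ∑ l, A i l • x l) (fun j => ∑ l, B j l • y l) = pdistT 𝕜 x y := by
  set a := ‖A.det‖
  set b := ‖B.det‖
  have hab : 0 < a * b := mul_pos (norm_pos_iff.2 hA) (norm_pos_iff.2 hB)
  have hxy : ‖gramDet 𝕜 (fun i => ∑ l, A i l • x l) (fun j => ∑ l, B j l • y l)‖ ^ 2
      = (a * b) ^ 2 * ‖gramDet 𝕜 x y‖ ^ 2 := by
    rw [gramDet_sum_smul, norm_mul, norm_mul, RCLike.norm_conj]
    ring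
  rw [pdistT, pdistT, re_gramDet_sum_smul_self, re_gramDet_sum_smul_self, hxy,
    wedgeNorm_sum_smul, wedgeNorm_sum_smul,
    show a ^ 2 * RCLike.re (gramDet 𝕜 x x) * (b ^ 2 * RCLike.re (gramDet 𝕜 y y))
        - (a * b) ^ 2 * ‖gramDet 𝕜 x y‖ ^ 2
      = (a * b) ^ 2 * (RCLike.re (gramDet 𝕜 x x) * RCLike.re (gramDet 𝕜 y y)
        - ‖gramDet 𝕜 x y‖ ^ 2) by ring,
    Real.sqrt_mul (by positivity), Real.sqrt_sq hab.le,
    show a * wedgeNorm 𝕜 x * (b * wedgeNorm 𝕜 y) = a * b * (wedgeNorm 𝕜 x * wedgeNorm 𝕜 y) by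
      ring,
    mul_div_mul_left _ _ hab.ne']

lemma LinearIndependent.exists_det_ne_zero_of_span_eq {b b' : Fin m → E}
    (hb : LinearIndependent 𝕜 b) (hb' : LinearIndependent 𝕜 b')
    (h : span 𝕜 (Set.range b) = span 𝕜 (Set.range b')) :
    ∃ A : Matrix (Fin m) (Fin m) 𝕜, A.det ≠ 0 ∧ b = fun i => ∑ j, A i j • b' j := by
  let B' := Basis.span hb'
  let B := (Basis.span hb).map (LinearEquiv.ofEq _ _ h)
  have hB : ∀ i, (B i : E) = b i := fun i => by simp [B]
  refine ⟨(B'.toMatrix B)ᵀ, ?_, funext fun i => ?_⟩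
  · have h1 := congrArg Matrix.det (B'.toMatrix_mul_toMatrix_flip B)
    rw [Matrix.det_mul, Matrix.det_one] at h1
    rw [Matrix.det_transpose]
    exact left_ne_zero_of_mul_eq_one h1
  · rw [← hB, ← B'.sum_repr (B i)]
    simp [B', Basis.toMatrix_apply]

lemma pdistT_eq_of_span_eq {b₁ b₁' b₂ b₂' : Fin m → E}
    (hb₁ : LinearIndependent 𝕜 b₁) (hb₁' : LinearIndependent 𝕜 b₁')
    (h₁ : span 𝕜 (Set.range b₁) = span 𝕜 (Set.range b₁'))
    (hb₂ : LinearIndependent 𝕜 b₂) (hb₂' : LinearIndependent 𝕜 b₂')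
    (h₂ : span 𝕜 (Set.range b₂) = span 𝕜 (Set.range b₂')) :
    pdistT 𝕜 b₁ b₂ = pdistT 𝕜 b₁' b₂' := by
  obtain ⟨A, hA, rfl⟩ := hb₁.exists_det_ne_zero_of_span_eq hb₁' h₁
  obtain ⟨B, hB, rfl⟩ := hb₂.exists_det_ne_zero_of_span_eq hb₂' h₂
  exact pdistT_sum_smul hA hB b₁' b₂'

lemma pdistT_nonneg (x y : Fin m → E) : 0 ≤ pdistT 𝕜 x y := by
  rw [pdistT, wedgeNorm, wedgeNorm]
  positivity

end Gram

section Snoc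

variable {k : ℕ} {w : Fin k → E} {u₁ u₂ : E}

lemma inner_snoc_snoc (hw : Orthonormal 𝕜 w) (h₁ : ∀ i, ⟪w i, u₁⟫_𝕜 = 0)
    (h₂ : ∀ i, ⟪w i, u₂⟫_𝕜 = 0) (i j : Fin (k + 1)) :
    ⟪(Fin.snoc w u₁ : Fin (k + 1) → E) i, (Fin.snoc w u₂ : Fin (k + 1) → E) j⟫_𝕜
      = Matrix.diagonal (Fin.snoc (1 : Fin k → 𝕜) ⟪u₁, u₂⟫_𝕜) i j := by
  induction i using Fin.lastCases with
  | last =>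
    induction j using Fin.lastCases with
    | last => simp only [Fin.snoc_last, Matrix.diagonal_apply_eq]
    | cast j =>
      rw [Fin.snoc_last, Fin.snoc_castSucc, Matrix.diagonal_apply_ne _ (Fin.castSucc_lt_last j).ne',
        ← inner_conj_symm, h₁ j, map_zero]
  | cast i =>
    induction j using Fin.lastCases with
    | last => simp [(Fin.castSucc_lt_last i).ne, h₂ i]
    | cast j =>
      simp only [Fin.snoc_castSucc, Matrix.diagonal_apply, Fin.castSucc_inj]
      exact orthonormal_iff_ite.1 hw i j

lemma Orthonormal.snoc (hw : Orthonormal 𝕜 w) (hu : ‖u₁‖ = 1) (h : ∀ i, ⟪w i, u₁⟫_𝕜 = 0) :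
    Orthonormal 𝕜 (Fin.snoc w u₁ : Fin (k + 1) → E) := by
  have hsnoc : (Fin.snoc (1 : Fin k → 𝕜) 1 : Fin (k + 1) → 𝕜) = 1 := by
    ext i
    induction i using Fin.lastCases <;> simp
  rw [orthonormal_iff_ite]
  intro i j
  rw [inner_snoc_snoc hw h h, inner_self_eq_norm_sq_to_K, hu, RCLike.ofReal_one, one_pow,
    hsnoc, Matrix.diagonal_apply, Pi.one_apply]

lemma gramDet_snoc (hw : Orthonormal 𝕜 w) (h₁ : ∀ i, ⟪w i, u₁⟫_𝕜 = 0)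
    (h₂ : ∀ i, ⟪w i, u₂⟫_𝕜 = 0) :
    gramDet 𝕜 (Fin.snoc w u₁ : Fin (k + 1) → E) (Fin.snoc w u₂) = ⟪u₁, u₂⟫_𝕜 := by
  have hM : Matrix.of (fun i j => ⟪(Fin.snoc w u₁ : Fin (k + 1) → E) i,
        (Fin.snoc w u₂ : Fin (k + 1) → E) j⟫_𝕜)
      = Matrix.diagonal (Fin.snoc (1 : Fin k → 𝕜) ⟪u₁, u₂⟫_𝕜) :=
    Matrix.ext (inner_snoc_snoc hw h₁ h₂)
  rw [gramDet, hM]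
  simp [Matrix.det_diagonal, Fin.prod_univ_castSucc]

lemma pdistT_snoc (hw : Orthonormal 𝕜 w) (hu₁ : ‖u₁‖ = 1) (hu₂ : ‖u₂‖ = 1)
    (h₁ : ∀ i, ⟪w i, u₁⟫_𝕜 = 0) (h₂ : ∀ i, ⟪w i, u₂⟫_𝕜 = 0) :
    pdistT 𝕜 (Fin.snoc w u₁ : Fin (k + 1) → E) (Fin.snoc w u₂) = √(1 - ‖⟪u₁, u₂⟫_𝕜‖ ^ 2) := by
  rw [pdistT, wedgeNorm, wedgeNorm, gramDet_snoc hw h₁ h₁, gramDet_snoc hw h₂ h₂,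
    gramDet_snoc hw h₁ h₂, inner_self_eq_norm_sq_to_K, inner_self_eq_norm_sq_to_K, hu₁, hu₂]
  simp

end Snoc

lemma norm_add_smul_sq {v u : E} (hu : ‖u‖ = 1) (hvu : ⟪v, u⟫_𝕜 = 0) (c : 𝕜) :
    ‖v + c • u‖ ^ 2 = ‖v‖ ^ 2 + ‖c‖ ^ 2 := by
  rw [sq, norm_add_sq_eq_norm_sq_add_norm_sq_of_inner_eq_zero v _
    (by rw [inner_smul_right, hvu, mul_zero]), norm_smul, hu, mul_one, sq, sq]

lemma pdist_add_smul_le {v u₁ u₂ : E} (c : 𝕜) (hu₁ : ‖u₁‖ = 1) (hu₂ : ‖u₂‖ = 1)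
    (hvu₁ : ⟪v, u₁⟫_𝕜 = 0) (hvu₂ : ⟪v, u₂⟫_𝕜 = 0) (ht : ⟪u₁, u₂⟫_𝕜 = ‖⟪u₁, u₂⟫_𝕜‖) :
    pdist 𝕜 (v + c • u₁) (v + c • u₂) ≤ √(1 - ‖⟪u₁, u₂⟫_𝕜‖ ^ 2) := by
  set t := ‖⟪u₁, u₂⟫_𝕜‖
  have ht0 : 0 ≤ t := norm_nonneg _
  have ht1 : t ≤ 1 := by simpa [hu₁, hu₂] using norm_inner_le_norm (𝕜 := 𝕜) u₁ u₂
  have hu₁v : ⟪u₁, v⟫_𝕜 = 0 := by rw [← inner_conj_symm, hvu₁, map_zero]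
  have hr : ‖v + c • u₁‖ ^ 2 = ‖v‖ ^ 2 + ‖c‖ ^ 2 := norm_add_smul_sq hu₁ hvu₁ c
  have hr₂ : ‖v + c • u₂‖ = ‖v + c • u₁‖ := by
    rw [← sq_eq_sq₀ (norm_nonneg _) (norm_nonneg _), hr, norm_add_smul_sq hu₂ hvu₂ c]
  have hinner : ⟪v + c • u₁, v + c • u₂⟫_𝕜 = ((‖v‖ ^ 2 + ‖c‖ ^ 2 * t : ℝ) : 𝕜) := by
    simp only [inner_add_left, inner_add_right, inner_smul_left, inner_smul_right, hvu₂, hu₁v,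
      ht, inner_self_eq_norm_sq_to_K, mul_zero, add_zero, zero_add]
    rw [← mul_assoc, RCLike.mul_conj]
    push_cast
    ring
  rw [pdist_eq, hr₂, hinner, RCLike.norm_ofReal, abs_of_nonneg (by positivity)]
  refine div_le_of_le_mul₀ (by positivity) (Real.sqrt_nonneg _) ?_
  rw [← Real.sqrt_sq (by positivity : 0 ≤ ‖v + c • u₁‖ * ‖v + c • u₁‖),
    ← Real.sqrt_mul (by nlinarith), mul_pow, hr]
  refine Real.sqrt_le_sqrt ?_
  -- with `a = ‖v‖²`, `b = ‖c‖²` this says `t (a + b) ≤ a + b t`, i.e. `t a ≤ a`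
  nlinarith [mul_nonneg (mul_nonneg (sq_nonneg ‖v‖) (sub_nonneg.2 ht1))
    (by positivity : 0 ≤ ‖v‖ ^ 2 + 2 * ‖c‖ ^ 2 * t + t * ‖v‖ ^ 2)]

lemma Submodule.exists_orthonormal_span_eq {k : ℕ} (W : Submodule 𝕜 E) [FiniteDimensional 𝕜 W]
    (hW : finrank 𝕜 W = k) :
    ∃ w : Fin k → E, Orthonormal 𝕜 w ∧ span 𝕜 (Set.range w) = W := by
  let b := (stdOrthonormalBasis 𝕜 W).reindex (finCongr hW)
  refine ⟨W.subtype ∘ b, b.orthonormal.comp_linearIsometry W.subtypeₗᵢ, ?_⟩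
  rw [Set.range_comp, span_image, ← b.coe_toBasis, b.toBasis.span_eq,
    map_subtype_top]

lemma Submodule.exists_norm_eq_one_sup_span_eq {W V : Submodule 𝕜 E} [FiniteDimensional 𝕜 V]
    (hWV : W ≤ V) (hrank : finrank 𝕜 W + 1 = finrank 𝕜 V) (z : E) :
    ∃ u ∈ Wᗮ, ‖u‖ = 1 ∧ ⟪z, u⟫_𝕜 = ‖⟪z, u⟫_𝕜‖ ∧ W ⊔ 𝕜 ∙ u = V := by
  have : FiniteDimensional 𝕜 W := finiteDimensional_of_le hWV
  have hU : finrank 𝕜 (Wᗮ ⊓ V : Submodule 𝕜 E) = 1 :=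
    finrank_add_inf_finrank_orthogonal' hWV hrank
  obtain ⟨u', hu'U, hu'0⟩ := exists_mem_ne_zero_of_ne_bot (p := Wᗮ ⊓ V)
    (by rintro h; rw [h, finrank_bot] at hU; exact zero_ne_one hU)
  obtain ⟨c, hc, hcz⟩ := RCLike.exists_norm_eq_mul_self ⟪z, (‖u'‖⁻¹ : 𝕜) • u'⟫_𝕜
  have hc0 : c ≠ 0 := by rintro rfl; simp at hc
  have hu'0' : (‖u'‖⁻¹ : 𝕜) ≠ 0 := by simpa using hu'0
  set u := c • (‖u'‖⁻¹ : 𝕜) • u'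
  have hspan : 𝕜 ∙ u = Wᗮ ⊓ V := by
    rw [span_singleton_smul_eq (IsUnit.mk0 _ hc0),
      span_singleton_smul_eq (IsUnit.mk0 _ hu'0')]
    refine eq_of_le_of_finrank_eq ((span_singleton_le_iff_mem _ _).2 hu'U) ?_
    rw [finrank_span_singleton hu'0, hU]
  refine ⟨u, (hspan ▸ mem_span_singleton_self u).1, ?_, ?_, ?_⟩
  · rw [norm_smul, hc, one_mul, norm_smul_inv_norm hu'0]
  · rw [inner_smul_right, ← hcz, RCLike.norm_ofReal, abs_norm]
  · rw [hspan, sup_orthogonal_inf_of_hasOrthogonalProjection hWV]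

lemma exists_pdist_le_of_sup_span_eq {W : Submodule 𝕜 E} {u₁ u₂ y₁ : E} (hu₁W : u₁ ∈ Wᗮ)
    (hu₂W : u₂ ∈ Wᗮ) (hu₁ : ‖u₁‖ = 1) (hu₂ : ‖u₂‖ = 1) (ht : ⟪u₁, u₂⟫_𝕜 = ‖⟪u₁, u₂⟫_𝕜‖)
    (hy₁ : y₁ ∈ W ⊔ 𝕜 ∙ u₁) (hy₁0 : y₁ ≠ 0) :
    ∃ y₂ ∈ W ⊔ 𝕜 ∙ u₂, y₂ ≠ 0 ∧ pdist 𝕜 y₁ y₂ ≤ √(1 - ‖⟪u₁, u₂⟫_𝕜‖ ^ 2) := by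
  obtain ⟨v, hv, _, hc, rfl⟩ := mem_sup.1 hy₁
  obtain ⟨c, rfl⟩ := mem_span_singleton.1 hc
  have hvu₁ : ⟪v, u₁⟫_𝕜 = 0 := inner_right_of_mem_orthogonal hv hu₁W
  have hvu₂ : ⟪v, u₂⟫_𝕜 = 0 := inner_right_of_mem_orthogonal hv hu₂W
  refine ⟨v + c • u₂, add_mem_sup hv (smul_mem _ c
    (mem_span_singleton_self u₂)), ?_, pdist_add_smul_le c hu₁ hu₂ hvu₁ hvu₂ ht⟩
  rw [← norm_ne_zero_iff, ← pow_ne_zero_iff two_ne_zero, norm_add_smul_sq hu₂ hvu₂,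
    ← norm_add_smul_sq hu₁ hvu₁]
  simpa using hy₁0

lemma exists_pdist_le_pdistT {k : ℕ} {V₁ V₂ : Submodule 𝕜 E}
    (h₁ : finrank 𝕜 V₁ = k + 1) (h₂ : finrank 𝕜 V₂ = k + 1)
    (hW : k ≤ finrank 𝕜 (V₁ ⊓ V₂ : Submodule 𝕜 E)) {b₁ b₂ : Fin (k + 1) → E}
    (hb₁ : LinearIndependent 𝕜 b₁) (hb₁s : span 𝕜 (Set.range b₁) = V₁)
    (hb₂ : LinearIndependent 𝕜 b₂) (hb₂s : span 𝕜 (Set.range b₂) = V₂)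
    {y₁ : E} (hy₁ : y₁ ∈ V₁) (hy₁0 : y₁ ≠ 0) :
    ∃ y₂ ∈ V₂, y₂ ≠ 0 ∧ pdist 𝕜 y₁ y₂ ≤ pdistT 𝕜 b₁ b₂ := by
  have : FiniteDimensional 𝕜 V₁ := finite_of_finrank_eq_succ h₁
  have : FiniteDimensional 𝕜 V₂ := finite_of_finrank_eq_succ h₂
  set W := V₁ ⊓ V₂
  have hWV₁ : finrank 𝕜 W ≤ k + 1 := h₁ ▸ finrank_mono inf_le_left
  rcases hW.eq_or_lt with hWk | hWk
  · obtain ⟨u₁, hu₁W, hu₁, -, hV₁⟩ := W.exists_norm_eq_one_sup_span_eq inf_le_left (by omega) 0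
    obtain ⟨u₂, hu₂W, hu₂, ht, hV₂⟩ :=
      W.exists_norm_eq_one_sup_span_eq inf_le_right (by omega) u₁
    obtain ⟨w, hw, hwW⟩ := W.exists_orthonormal_span_eq hWk.symm
    have hwW' : ∀ i, w i ∈ W := fun i => hwW ▸ subset_span (Set.mem_range_self i)
    have hwu₁ : ∀ i, ⟪w i, u₁⟫_𝕜 = 0 := fun i => inner_right_of_mem_orthogonal (hwW' i) hu₁W
    have hwu₂ : ∀ i, ⟪w i, u₂⟫_𝕜 = 0 := fun i => inner_right_of_mem_orthogonal (hwW' i) hu₂W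
    have hspan : ∀ u, span 𝕜 (Set.range (Fin.snoc w u : Fin (k + 1) → E)) = W ⊔ 𝕜 ∙ u := by
      intro u
      rw [Fin.range_snoc, span_insert, hwW, sup_comm]
    rw [pdistT_eq_of_span_eq hb₁ (hw.snoc hu₁ hwu₁).linearIndependent (by rw [hb₁s, hspan, hV₁])
      hb₂ (hw.snoc hu₂ hwu₂).linearIndependent (by rw [hb₂s, hspan, hV₂]),
      pdistT_snoc hw hu₁ hu₂ hwu₁ hwu₂, ← hV₂]
    exact exists_pdist_le_of_sup_span_eq hu₁W hu₂W hu₁ hu₂ ht (hV₁ ▸ hy₁) hy₁0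
  · have hV₁ : W = V₁ := eq_of_le_of_finrank_eq inf_le_left (by omega)
    have hV₂ : W = V₂ := eq_of_le_of_finrank_eq inf_le_right (by omega)
    exact ⟨y₁, hV₂ ▸ hV₁ ▸ hy₁, hy₁0, (pdist_self (𝕜 := 𝕜) y₁).symm ▸ pdistT_nonneg b₁ b₂⟩

lemma pdistPV_le_add_of_forall_exists {V₁ V₂ : Submodule 𝕜 E} (hV₁ : V₁ ≠ ⊥) {r : ℝ}
    (h : ∀ y₁ ∈ V₁, y₁ ≠ 0 → ∃ y₂ ∈ V₂, y₂ ≠ 0 ∧ pdist 𝕜 y₁ y₂ ≤ r) (x : E) :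
    pdistPV 𝕜 x V₂ ≤ pdistPV 𝕜 x V₁ + r := by
  obtain ⟨y, hy, hy0⟩ := exists_mem_ne_zero_of_ne_bot hV₁
  unfold pdistPV
  rw [← sub_le_iff_le_add]
  refine le_csInf ⟨_, y, hy, hy0, rfl⟩ ?_
  rintro _ ⟨y₁, hy₁, hy₁0, rfl⟩
  obtain ⟨y₂, hy₂, hy₂0, hr⟩ := h y₁ hy₁ hy₁0
  rw [sub_le_iff_le_add]
  calc sInf {d | ∃ y ∈ V₂, y ≠ 0 ∧ d = pdist 𝕜 x y}
      ≤ pdist 𝕜 x y₂ :=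
        csInf_le ⟨0, fun _ ⟨y, _, _, hd⟩ => hd ▸ pdist_nonneg x y⟩ ⟨y₂, hy₂, hy₂0, rfl⟩
    _ ≤ pdist 𝕜 x y₁ + pdist 𝕜 y₁ y₂ := pdist_triangle x y₂ hy₁0
    _ ≤ pdist 𝕜 x y₁ + r := by gcongr

end

theorem stmt7_general {𝕜 : Type*} [RCLike 𝕜] {n k : ℕ}
    (V₁ V₂ : Submodule 𝕜 (EuclideanSpace 𝕜 (Fin n)))
    (h₁ : Module.finrank 𝕜 V₁ = k + 1) (h₂ : Module.finrank 𝕜 V₂ = k + 1)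
    (hW : k ≤ Module.finrank 𝕜 (V₁ ⊓ V₂ : Submodule 𝕜 (EuclideanSpace 𝕜 (Fin n))))
    (b₁ b₂ : Fin (k + 1) → EuclideanSpace 𝕜 (Fin n))
    (hb₁ : LinearIndependent 𝕜 b₁) (hb₁s : Submodule.span 𝕜 (Set.range b₁) = V₁)
    (hb₂ : LinearIndependent 𝕜 b₂) (hb₂s : Submodule.span 𝕜 (Set.range b₂) = V₂)
    (x : EuclideanSpace 𝕜 (Fin n)) :
    pdistPV 𝕜 x V₂ ≤ pdistPV 𝕜 x V₁ + pdistT 𝕜 b₁ b₂ := by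
  have hV₁ : V₁ ≠ ⊥ := by
    rintro rfl
    simp at h₁
  exact pdistPV_le_add_of_forall_exists hV₁
    (fun _ hy₁ hy₁0 => exists_pdist_le_pdistT h₁ h₂ hW hb₁ hb₁s hb₂ hb₂s hy₁ hy₁0) x

/-- for `(m−1)`-dimensional subspaces `V₁, V₂` of `Lⁿ` (here
`m = k+2`, `L = ℝ` or `ℂ`) with `dim(V₁ ∩ V₂) ≥ m−2 = k`, and any nonzero
`x ∈ Lⁿ`, we have `dist(x,V₂) ≤ dist(x,V₁) + dist(V₁,V₂)`, where
`dist(V₁,V₂)` is computed via bases `b₁`, `b₂` of `V₁`, `V₂`. -/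
theorem stmt7 {𝕜 : Type*} [RCLike 𝕜] {n k : ℕ} (hn : k + 2 ≤ n)
    (V₁ V₂ : Submodule 𝕜 (EuclideanSpace 𝕜 (Fin n)))
    (h₁ : Module.finrank 𝕜 V₁ = k + 1) (h₂ : Module.finrank 𝕜 V₂ = k + 1)
    (hW : k ≤ Module.finrank 𝕜 (V₁ ⊓ V₂ : Submodule 𝕜 (EuclideanSpace 𝕜 (Fin n))))
    (b₁ b₂ : Fin (k + 1) → EuclideanSpace 𝕜 (Fin n))
    (hb₁ : LinearIndependent 𝕜 b₁) (hb₁s : Submodule.span 𝕜 (Set.range b₁) = V₁)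
    (hb₂ : LinearIndependent 𝕜 b₂) (hb₂s : Submodule.span 𝕜 (Set.range b₂) = V₂)
    (x : EuclideanSpace 𝕜 (Fin n)) (hx : x ≠ 0) :
    pdistPV 𝕜 x V₂ ≤ pdistPV 𝕜 x V₁ + pdistT 𝕜 b₁ b₂ :=
  stmt7_general V₁ V₂ h₁ h₂ hW b₁ b₂ hb₁ hb₁s hb₂ hb₂s x
end

section
/- Let k, ℓ, m be integers with 1 ≤ k < ℓ ≤ m ≤ n and let y₁,...,yₘ be linearly independent vectors of Lⁿ (L = ℝ or ℂ) such that both sequences obtained by omitting y_ℓ and by omitting y_k are almost orthogonal. Then the subspaces V₁ = span(y₁,...,ŷ_ℓ,...,yₘ) and V₂ = span(y₁,...,ŷ_k,...,yₘ) satisfy dist(V₁,V₂) ≤ e⁴ · ‖y₁ ∧ ⋯ ∧ yₘ‖/(‖y₁‖⋯‖yₘ‖). -/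
/-- The span of the vectors `x i` with `i < j`. -/
noncomputable def earlierSpan {𝕜 : Type*} [RCLike 𝕜] {E : Type*} [NormedAddCommGroup E]
    [InnerProductSpace 𝕜 E] {m : ℕ} (x : Fin m → E) (j : Fin m) : Submodule 𝕜 E :=
  Submodule.span 𝕜 {v : E | ∃ i : Fin m, i < j ∧ v = x i}

/-- A sequence `(x₁,…,xₘ)` is almost orthogonal if it is linearly independent
and `dist(xⱼ, ⟨x₁,…,x_{j−1}⟩) ≥ 1 − 1/2^{j−1}` for `2 ≤ j ≤ m`.
(Here the index `j : Fin m` is `0`-based, so the condition reads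
`1 − (1/2)^j ≤ dist(x j, span (x i, i < j))` for `j ≥ 1`.) -/
def AlmostOrthogonal (𝕜 : Type*) [RCLike 𝕜] {E : Type*} [NormedAddCommGroup E]
    [InnerProductSpace 𝕜 E] {m : ℕ} (x : Fin m → E) : Prop :=
  LinearIndependent 𝕜 x ∧
    ∀ j : Fin m, 0 < (j : ℕ) →
      1 - (1 / 2 : ℝ) ^ (j : ℕ) ≤ pdistPV 𝕜 (x j) (earlierSpan x j)

/-!
Let `ω` be `y` with `y_k` and `y_l` removed, and let `a`, `b` be the components of `y_k`, `y_l`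
orthogonal to `span ω`. The Schur complement formula for Gram determinants gives
`G(V₁) = G(ω)‖a‖²`, `G(V₂) = G(ω)‖b‖²`, `G(V₁,V₂) = G(ω)⟪a,b⟫` and
`G(y) = G(ω)(‖a‖²‖b‖² − |⟪a,b⟫|²)`, hence `G(V₁)G(V₂) − |G(V₁,V₂)|² = G(ω)G(y)`, i.e.
`dist(V₁,V₂) = ‖ω‖‖y‖/(‖V₁‖‖V₂‖)`.

The norm `‖x₁ ∧ ⋯ ∧ xₘ‖` is the product of the distances from each `xⱼ` to the span of its
predecessors. This gives Hadamard's inequality `‖ω‖ ≤ ∏‖ωᵢ‖`, and for an almost orthogonal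
sequence `‖x₁ ∧ ⋯ ∧ xₘ‖ ≥ ∏ⱼ(1 − 2⁻ʲ)‖xⱼ‖ ≥ e⁻²∏‖xⱼ‖`. Since `∏V₁ · ∏V₂ = ∏ω · ∏y`
for the products of the norms, the two estimates combine to give the bound `e⁴`.
-/

open Submodule
open scoped Matrix ComplexOrder InnerProductSpace

section GramMatrix

variable {𝕜 : Type*} [RCLike 𝕜] {E : Type*} [NormedAddCommGroup E] [InnerProductSpace 𝕜 E]
  {ι κ : Type*}

instance finiteDimensional_span_range [Finite ι] (x : ι → E) :
    FiniteDimensional 𝕜 (span 𝕜 (Set.range x)) :=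
  Module.Finite.span_of_finite 𝕜 (Set.finite_range x)

variable (𝕜) in
def gramMatrix (x : ι → E) (y : κ → E) : Matrix ι κ 𝕜 :=
  Matrix.of fun i j => ⟪x i, y j⟫_𝕜

lemma gramDet_eq_det_gramMatrix {m : ℕ} (x y : Fin m → E) :
    gramDet 𝕜 x y = (gramMatrix 𝕜 x y).det := rfl

lemma conjTranspose_gramMatrix (x : ι → E) (y : κ → E) :
    (gramMatrix 𝕜 x y)ᴴ = gramMatrix 𝕜 y x := by
  ext; simp [gramMatrix]

lemma gramMatrix_sumElim {ι' κ' : Type*} (x : ι → E) (z : ι' → E) (x' : κ → E) (w : κ' → E) :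
    gramMatrix 𝕜 (Sum.elim x z) (Sum.elim x' w) =
      Matrix.fromBlocks (gramMatrix 𝕜 x x') (gramMatrix 𝕜 x w)
        (gramMatrix 𝕜 z x') (gramMatrix 𝕜 z w) := by
  ext (i | i) (j | j) <;> rfl

lemma det_gramMatrix_fin_one (x y : Fin 1 → E) : (gramMatrix 𝕜 x y).det = ⟪x 0, y 0⟫_𝕜 :=
  Matrix.det_unique _

lemma det_gramMatrix_fin_two (x : Fin 2 → E) :
    (gramMatrix 𝕜 x x).det = ((‖x 0‖ ^ 2 * ‖x 1‖ ^ 2 - ‖⟪x 0, x 1⟫_𝕜‖ ^ 2 : ℝ) : 𝕜) := by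
  rw [Matrix.det_fin_two]
  simp only [gramMatrix, Matrix.of_apply, inner_self_eq_norm_sq_to_K]
  rw [← inner_conj_symm (x 0) (x 1), RCLike.conj_mul, RCLike.norm_conj]
  push_cast
  ring

variable [Fintype ι] [DecidableEq ι] [Fintype κ] [DecidableEq κ]

lemma det_gramMatrix_comp_equiv (x y : ι → E) (e : κ ≃ ι) :
    (gramMatrix 𝕜 (x ∘ e) (y ∘ e)).det = (gramMatrix 𝕜 x y).det :=
  Matrix.det_submatrix_equiv_self e (gramMatrix 𝕜 x y)

lemma norm_det_gramMatrix_comp_equiv (x y : ι → E) (e₁ e₂ : κ ≃ ι) :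
    ‖(gramMatrix 𝕜 (x ∘ e₁) (y ∘ e₂)).det‖ = ‖(gramMatrix 𝕜 x y).det‖ := by
  have h : gramMatrix 𝕜 (x ∘ e₁) (y ∘ e₂) =
      ((gramMatrix 𝕜 x y).submatrix (e₂.symm.trans e₁ : Equiv.Perm ι) id).submatrix e₂ e₂ := by
    ext; simp [gramMatrix]
  rw [h, Matrix.det_submatrix_equiv_self, Matrix.det_permute, norm_mul]
  rcases Int.units_eq_one_or (Equiv.Perm.sign (e₂.symm.trans e₁)) with hs | hs <;> simp [hs]

lemma det_gramMatrix_self_nonneg (x : ι → E) : 0 ≤ (gramMatrix 𝕜 x x).det :=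
  (Matrix.posSemidef_gram 𝕜 x).det_nonneg

lemma det_gramMatrix_sumElim_of_orthogonal (x x' : ι → E) (z w : κ → E)
    (h : ∀ i j, ⟪z i, x' j⟫_𝕜 = 0) :
    (gramMatrix 𝕜 (Sum.elim x z) (Sum.elim x' w)).det =
      (gramMatrix 𝕜 x x').det * (gramMatrix 𝕜 z w).det := by
  rw [gramMatrix_sumElim, show gramMatrix 𝕜 z x' = 0 from Matrix.ext h,
    Matrix.det_fromBlocks_zero₂₁]

lemma det_gramMatrix_sumElim_add_left (x : ι → E) (z p : κ → E) (y : ι ⊕ κ → E)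
    (hp : ∀ j, p j ∈ span 𝕜 (Set.range x)) :
    (gramMatrix 𝕜 (Sum.elim x (z + p)) y).det = (gramMatrix 𝕜 (Sum.elim x z) y).det := by
  choose c hc using fun j => (mem_span_range_iff_exists_fun 𝕜).1 (hp j)
  have h : gramMatrix 𝕜 (Sum.elim x (z + p)) y =
      Matrix.fromBlocks 1 0 (Matrix.of fun j i => starRingEnd 𝕜 (c j i)) 1 *
        gramMatrix 𝕜 (Sum.elim x z) y := by
    ext (i | j) k <;>
      simp [gramMatrix, Matrix.mul_apply, Fintype.sum_sum_type, Matrix.one_apply, ← hc,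
        inner_add_left, sum_inner, inner_smul_left, add_comm]
  rw [h, Matrix.det_mul, Matrix.det_fromBlocks_zero₁₂, Matrix.det_one, Matrix.det_one, one_mul,
    one_mul]

lemma det_gramMatrix_sumElim_add_right (x : ι → E) (z p : κ → E) (y : ι ⊕ κ → E)
    (hp : ∀ j, p j ∈ span 𝕜 (Set.range x)) :
    (gramMatrix 𝕜 y (Sum.elim x (z + p))).det = (gramMatrix 𝕜 y (Sum.elim x z)).det := by
  rw [← conjTranspose_gramMatrix, Matrix.det_conjTranspose,
    det_gramMatrix_sumElim_add_left x z p y hp, ← Matrix.det_conjTranspose,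
    conjTranspose_gramMatrix]

theorem det_gramMatrix_sumElim (x : ι → E) (z w : κ → E) :
    (gramMatrix 𝕜 (Sum.elim x z) (Sum.elim x w)).det =
      (gramMatrix 𝕜 x x).det *
        (gramMatrix 𝕜 ((span 𝕜 (Set.range x))ᗮ.starProjection ∘ z)
          ((span 𝕜 (Set.range x))ᗮ.starProjection ∘ w)).det := by
  set K := span 𝕜 (Set.range x)
  have hsplit (z : κ → E) : z = Kᗮ.starProjection ∘ z + K.starProjection ∘ z := by
    ext j; simp
  have hproj (z : κ → E) (j : κ) : (K.starProjection ∘ z) j ∈ K := K.starProjection_apply_mem _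
  calc (gramMatrix 𝕜 (Sum.elim x z) (Sum.elim x w)).det
      = (gramMatrix 𝕜 (Sum.elim x (Kᗮ.starProjection ∘ z + K.starProjection ∘ z))
          (Sum.elim x (Kᗮ.starProjection ∘ w + K.starProjection ∘ w))).det := by
        rw [← hsplit, ← hsplit]
    _ = (gramMatrix 𝕜 (Sum.elim x (Kᗮ.starProjection ∘ z))
          (Sum.elim x (Kᗮ.starProjection ∘ w))).det := by
        rw [det_gramMatrix_sumElim_add_left _ _ _ _ (hproj z),
          det_gramMatrix_sumElim_add_right _ _ _ _ (hproj w)]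
    _ = _ := det_gramMatrix_sumElim_of_orthogonal _ _ _ _ fun i j =>
        inner_left_of_mem_orthogonal (subset_span (Set.mem_range_self j))
          (Kᗮ.starProjection_apply_mem _)

lemma det_gramMatrix_sumElim_fin_one (x : ι → E) (u v : E) :
    (gramMatrix 𝕜 (Sum.elim x ![u]) (Sum.elim x ![v])).det =
      (gramMatrix 𝕜 x x).det *
        ⟪(span 𝕜 (Set.range x))ᗮ.starProjection u, (span 𝕜 (Set.range x))ᗮ.starProjection v⟫_𝕜 := by
  rw [det_gramMatrix_sumElim, det_gramMatrix_fin_one]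
  rfl

end GramMatrix

def succAboveSumEquiv {r : ℕ} (q : Fin (r + 1)) : Fin r ⊕ Fin 1 ≃ Fin (r + 1) :=
  ((Equiv.refl _).sumCongr finOneEquiv).trans
    ((Equiv.optionEquivSumPUnit _).symm.trans (finSuccEquiv' q).symm)

lemma comp_succAboveSumEquiv {α : Type*} {r : ℕ} (f : Fin (r + 1) → α) (q : Fin (r + 1)) :
    f ∘ succAboveSumEquiv q = Sum.elim (f ∘ q.succAbove) ![f q] := by
  ext (i | i)
  · simp [succAboveSumEquiv]
  · fin_cases i
    simp [succAboveSumEquiv]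

lemma Fin.prod_comp_succAbove_mul_prod {M : Type*} [CommMonoid M] {p : ℕ} (f : Fin (p + 2) → M)
    (j : Fin (p + 2)) (i : Fin (p + 1)) :
    (∏ q, f (j.succAbove q)) * ∏ q, f ((j.succAbove i).succAbove q) =
      (∏ q, f (j.succAbove (i.succAbove q))) * ∏ q, f q := by
  rw [Fin.prod_univ_succAbove (fun q => f (j.succAbove q)) i,
    Fin.prod_univ_succAbove f (j.succAbove i), mul_right_comm, mul_comm]

section Residual

variable {𝕜 : Type*} [RCLike 𝕜] {E : Type*} [NormedAddCommGroup E] [InnerProductSpace 𝕜 E]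
  {m : ℕ}

instance finiteDimensional_earlierSpan (x : Fin m → E) (j : Fin m) :
    FiniteDimensional 𝕜 (earlierSpan (𝕜 := 𝕜) x j) :=
  Module.Finite.span_of_finite 𝕜
    ((Set.finite_range x).subset fun _ ⟨i, _, hi⟩ => ⟨i, hi.symm⟩)

variable (𝕜) in
noncomputable def earlierResidual (x : Fin m → E) (j : Fin m) : E :=
  (earlierSpan (𝕜 := 𝕜) x j)ᗮ.starProjection (x j)

lemma Submodule.starProjection_congr {K K' : Submodule 𝕜 E} [K.HasOrthogonalProjection]
    [K'.HasOrthogonalProjection] (h : K = K') (v : E) :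
    K.starProjection v = K'.starProjection v := by
  subst h; rfl

lemma earlierSpan_castSucc (x : Fin (m + 1) → E) (j : Fin m) :
    earlierSpan (𝕜 := 𝕜) x j.castSucc = earlierSpan (Fin.init x) j := by
  unfold earlierSpan
  congr 1
  ext v
  constructor
  · rintro ⟨i, hi, rfl⟩
    exact ⟨i.castPred (Fin.ne_last_of_lt hi), by simpa [Fin.lt_def] using hi, by simp [Fin.init]⟩
  · rintro ⟨i, hi, rfl⟩
    exact ⟨i.castSucc, Fin.castSucc_lt_castSucc_iff.2 hi, rfl⟩

lemma earlierSpan_last (x : Fin (m + 1) → E) :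
    earlierSpan (𝕜 := 𝕜) x (Fin.last m) = span 𝕜 (Set.range (Fin.init x)) := by
  unfold earlierSpan
  congr 1
  ext v
  constructor
  · rintro ⟨i, hi, rfl⟩
    exact ⟨i.castPred hi.ne, by simp [Fin.init]⟩
  · rintro ⟨i, rfl⟩
    exact ⟨i.castSucc, Fin.castSucc_lt_last i, rfl⟩

lemma earlierSpan_zero (x : Fin (m + 1) → E) : earlierSpan (𝕜 := 𝕜) x 0 = ⊥ := by
  rw [earlierSpan, span_eq_bot]
  rintro _ ⟨i, hi, -⟩
  exact absurd hi (Fin.not_lt_zero i)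

lemma earlierResidual_castSucc (x : Fin (m + 1) → E) (j : Fin m) :
    earlierResidual 𝕜 x j.castSucc = earlierResidual 𝕜 (Fin.init x) j :=
  starProjection_congr (by rw [earlierSpan_castSucc]) _

lemma earlierResidual_last (x : Fin (m + 1) → E) :
    earlierResidual 𝕜 x (Fin.last m) =
      (span 𝕜 (Set.range (Fin.init x)))ᗮ.starProjection (x (Fin.last m)) :=
  starProjection_congr (by rw [earlierSpan_last]) _

lemma earlierResidual_zero (x : Fin (m + 1) → E) : earlierResidual 𝕜 x 0 = x 0 := by
  rw [earlierResidual, starProjection_congr (by rw [earlierSpan_zero, bot_orthogonal_eq_top]),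
    starProjection_top]
  rfl

theorem gramDet_self_eq_prod : ∀ {m : ℕ} (x : Fin m → E),
    gramDet 𝕜 x x = ∏ j, ((‖earlierResidual 𝕜 x j‖ ^ 2 : ℝ) : 𝕜)
  | 0, x => by simp [gramDet]
  | m + 1, x => by
    rw [gramDet_eq_det_gramMatrix, ← det_gramMatrix_comp_equiv x x (succAboveSumEquiv (Fin.last m)),
      comp_succAboveSumEquiv, det_gramMatrix_sumElim_fin_one, Fin.succAbove_last,
      ← gramDet_eq_det_gramMatrix, gramDet_self_eq_prod, Fin.prod_univ_castSucc,
      inner_self_eq_norm_sq_to_K, earlierResidual_last]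
    simp only [earlierResidual_castSucc]
    push_cast
    rfl

end Residual

section WedgeNorm

variable {𝕜 : Type*} [RCLike 𝕜] {E : Type*} [NormedAddCommGroup E] [InnerProductSpace 𝕜 E]
  {m : ℕ}

theorem wedgeNorm_eq_prod (x : Fin m → E) : wedgeNorm 𝕜 x = ∏ j, ‖earlierResidual 𝕜 x j‖ := by
  rw [wedgeNorm, gramDet_self_eq_prod, ← RCLike.ofReal_prod, RCLike.ofReal_re, Finset.prod_pow,
    Real.sqrt_sq (Finset.prod_nonneg fun _ _ => norm_nonneg _)]

theorem wedgeNorm_le_prod_norm (x : Fin m → E) : wedgeNorm 𝕜 x ≤ ∏ j, ‖x j‖ := by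
  rw [wedgeNorm_eq_prod]
  exact Finset.prod_le_prod (fun _ _ => norm_nonneg _)
    fun j _ => norm_starProjection_apply_le _ (x j)

lemma pdist_starProjection (K : Submodule 𝕜 E) [K.HasOrthogonalProjection] {v : E}
    (hv : K.starProjection v ≠ 0) :
    pdist 𝕜 v (K.starProjection v) = ‖Kᗮ.starProjection v‖ / ‖v‖ := by
  set P := K.starProjection v
  have hinner : ⟪v, P⟫_𝕜 = ((‖P‖ ^ 2 : ℝ) : 𝕜) := by
    have h := K.starProjection_inner_eq_zero v P (K.starProjection_apply_mem v)
    rw [inner_sub_left, sub_eq_zero] at h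
    rw [h, inner_self_eq_norm_sq_to_K]
    push_cast; rfl
  have hpyth := norm_sq_eq_add_norm_sq_starProjection v K
  have hgram : ‖v‖ ^ 2 * ‖P‖ ^ 2 - ‖⟪v, P⟫_𝕜‖ ^ 2 = (‖P‖ * ‖Kᗮ.starProjection v‖) ^ 2 := by
    rw [hinner, RCLike.norm_ofReal, abs_of_nonneg (sq_nonneg _), hpyth]
    ring
  have hP : 0 < ‖P‖ := norm_pos_iff.2 hv
  rw [pdist, wedgeNorm, gramDet_eq_det_gramMatrix, det_gramMatrix_fin_two]
  simp only [Matrix.cons_val_zero, Matrix.cons_val_one, RCLike.ofReal_re]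
  rw [hgram, Real.sqrt_sq (by positivity)]
  field_simp

lemma pdist_nonneg_s12 (v w : E) : 0 ≤ pdist 𝕜 v w :=
  div_nonneg (Real.sqrt_nonneg _) (by positivity)

lemma mul_norm_le_norm_starProjection_orthogonal (K : Submodule 𝕜 E) [K.HasOrthogonalProjection]
    {v : E} {c : ℝ} (hc : c ≤ 1) (h : c ≤ pdistPV 𝕜 v K) :
    c * ‖v‖ ≤ ‖Kᗮ.starProjection v‖ := by
  by_cases hv : K.starProjection v = 0
  · rw [starProjection_orthogonal_val, hv, sub_zero]
    exact mul_le_of_le_one_left (norm_nonneg v) hc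
  · have hv₀ : 0 < ‖v‖ := norm_pos_iff.2 fun h0 => hv (by rw [h0, map_zero])
    have hle : pdistPV 𝕜 v K ≤ pdist 𝕜 v (K.starProjection v) :=
      csInf_le ⟨0, fun _ ⟨w, _, _, hd⟩ => hd ▸ pdist_nonneg_s12 v w⟩
        ⟨_, K.starProjection_apply_mem v, hv, rfl⟩
    rw [pdist_starProjection K hv] at hle
    exact (le_div_iff₀ hv₀).1 (h.trans hle)

end WedgeNorm

lemma Real.exp_neg_two_mul_le_one_sub {t : ℝ} (h₀ : 0 ≤ t) (h₁ : t ≤ 1 / 2) :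
    Real.exp (-(2 * t)) ≤ 1 - t := by
  have hpos : 0 < 1 + 2 * t := by linarith
  calc Real.exp (-(2 * t)) = (Real.exp (2 * t))⁻¹ := Real.exp_neg _
    _ ≤ (1 + 2 * t)⁻¹ := inv_anti₀ hpos (by linarith [Real.add_one_le_exp (2 * t)])
    _ ≤ 1 - t := by rw [inv_le_iff_one_le_mul₀ hpos]; nlinarith

lemma Real.exp_neg_two_le_prod_one_sub_half_pow (n : ℕ) :
    Real.exp (-2) ≤ ∏ i ∈ Finset.range n, (1 - (1 / 2 : ℝ) ^ (i + 1)) := by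
  suffices h : Real.exp (-(2 * (1 - (1 / 2) ^ n))) ≤
      ∏ i ∈ Finset.range n, (1 - (1 / 2 : ℝ) ^ (i + 1)) by
    have : (0 : ℝ) ≤ (1 / 2) ^ n := by positivity
    exact (Real.exp_le_exp.2 (by linarith)).trans h
  induction n with
  | zero => simp
  | succ n ih =>
    have hpow : (1 / 2 : ℝ) ^ (n + 1) ≤ 1 / 2 :=
      (pow_le_of_le_one (by norm_num) (by norm_num) n.succ_ne_zero).trans (by norm_num)
    rw [Finset.prod_range_succ]
    calc Real.exp (-(2 * (1 - (1 / 2) ^ (n + 1))))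
        = Real.exp (-(2 * (1 - (1 / 2) ^ n))) * Real.exp (-(2 * (1 / 2) ^ (n + 1))) := by
          rw [← Real.exp_add]; ring_nf
      _ ≤ _ := mul_le_mul ih (Real.exp_neg_two_mul_le_one_sub (by positivity) hpow)
          (Real.exp_pos _).le (Finset.prod_nonneg fun i _ => by
            have : (1 / 2 : ℝ) ^ (i + 1) ≤ 1 := pow_le_one₀ (by norm_num) (by norm_num)
            linarith)

theorem AlmostOrthogonal.exp_neg_two_mul_prod_norm_le_wedgeNorm {𝕜 : Type*} [RCLike 𝕜] {E : Type*}
    [NormedAddCommGroup E] [InnerProductSpace 𝕜 E] {m : ℕ} {x : Fin m → E}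
    (h : AlmostOrthogonal 𝕜 x) : Real.exp (-2) * ∏ j, ‖x j‖ ≤ wedgeNorm 𝕜 x := by
  cases m with
  | zero => simp [wedgeNorm, gramDet, Real.exp_le_one_iff]
  | succ m =>
    have hc (i : Fin m) : 0 ≤ 1 - (1 / 2 : ℝ) ^ ((i : ℕ) + 1) :=
      sub_nonneg.2 (pow_le_one₀ (by norm_num) (by norm_num))
    have hres (i : Fin m) :
        (1 - (1 / 2 : ℝ) ^ ((i : ℕ) + 1)) * ‖x i.succ‖ ≤ ‖earlierResidual 𝕜 x i.succ‖ :=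
      mul_norm_le_norm_starProjection_orthogonal _ (sub_le_self _ (by positivity))
        (by simpa using h.2 i.succ i.succ_pos)
    have hprod : Real.exp (-2) ≤ ∏ i : Fin m, (1 - (1 / 2 : ℝ) ^ ((i : ℕ) + 1)) := by
      rw [Fin.prod_univ_eq_prod_range (fun i => 1 - (1 / 2 : ℝ) ^ (i + 1))]
      exact Real.exp_neg_two_le_prod_one_sub_half_pow m
    rw [wedgeNorm_eq_prod, Fin.prod_univ_succ, Fin.prod_univ_succ, earlierResidual_zero]
    calc Real.exp (-2) * (‖x 0‖ * ∏ i : Fin m, ‖x i.succ‖)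
        = ‖x 0‖ * (Real.exp (-2) * ∏ i : Fin m, ‖x i.succ‖) := by ring
      _ ≤ ‖x 0‖ * ((∏ i : Fin m, (1 - (1 / 2 : ℝ) ^ ((i : ℕ) + 1))) * ∏ i : Fin m, ‖x i.succ‖) := by
        gcongr
      _ = ‖x 0‖ * ∏ i : Fin m, (1 - (1 / 2 : ℝ) ^ ((i : ℕ) + 1)) * ‖x i.succ‖ := by
        rw [Finset.prod_mul_distrib]
      _ ≤ ‖x 0‖ * ∏ i : Fin m, ‖earlierResidual 𝕜 x i.succ‖ := by
        gcongr with i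
        · exact fun i _ => mul_nonneg (hc i) (norm_nonneg _)
        · exact hres i

section TwoOmitted

variable {𝕜 : Type*} [RCLike 𝕜] {E : Type*} [NormedAddCommGroup E] [InnerProductSpace 𝕜 E]

theorem det_gramMatrix_desnanot_jacobi {ι : Type*} [Fintype ι] [DecidableEq ι]
    (ω : ι → E) (u v : E) :
    RCLike.re (gramMatrix 𝕜 (Sum.elim ω ![u]) (Sum.elim ω ![u])).det *
        RCLike.re (gramMatrix 𝕜 (Sum.elim ω ![v]) (Sum.elim ω ![v])).det -
      ‖(gramMatrix 𝕜 (Sum.elim ω ![u]) (Sum.elim ω ![v])).det‖ ^ 2 =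
    RCLike.re (gramMatrix 𝕜 ω ω).det *
      RCLike.re (gramMatrix 𝕜 (Sum.elim (Sum.elim ω ![u]) ![v])
        (Sum.elim (Sum.elim ω ![u]) ![v])).det := by
  set K := span 𝕜 (Set.range ω)
  obtain ⟨g, hg₀, hg⟩ := RCLike.nonneg_iff_exists_ofReal.1 (det_gramMatrix_self_nonneg (𝕜 := 𝕜) ω)
  have hassoc : Sum.elim (Sum.elim ω ![u]) ![v] ∘ (Equiv.sumAssoc ι (Fin 1) (Fin 1)).symm =
      Sum.elim ω (Sum.elim ![u] ![v]) := by
    ext (i | i | i) <;> rfl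
  have hpair : (gramMatrix 𝕜 (Sum.elim (Sum.elim ω ![u]) ![v])
      (Sum.elim (Sum.elim ω ![u]) ![v])).det =
      g * ((‖Kᗮ.starProjection u‖ ^ 2 * ‖Kᗮ.starProjection v‖ ^ 2 -
        ‖⟪Kᗮ.starProjection u, Kᗮ.starProjection v⟫_𝕜‖ ^ 2 : ℝ) : 𝕜) := by
    rw [← det_gramMatrix_comp_equiv _ _ (Equiv.sumAssoc ι (Fin 1) (Fin 1)).symm, hassoc,
      det_gramMatrix_sumElim, ← hg, ← det_gramMatrix_comp_equiv _ _ finSumFinEquiv.symm,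
      det_gramMatrix_fin_two]
    rfl
  rw [det_gramMatrix_sumElim_fin_one, det_gramMatrix_sumElim_fin_one,
    det_gramMatrix_sumElim_fin_one, hpair, ← hg, inner_self_eq_norm_sq_to_K,
    inner_self_eq_norm_sq_to_K, norm_mul, RCLike.norm_ofReal, abs_of_nonneg hg₀]
  simp only [← RCLike.ofReal_pow, ← RCLike.ofReal_mul, RCLike.ofReal_re]
  ring

theorem pdistT_comp_succAbove {p : ℕ} (y : Fin (p + 2) → E) (j : Fin (p + 2)) (i : Fin (p + 1)) :
    pdistT 𝕜 (y ∘ j.succAbove) (y ∘ (j.succAbove i).succAbove) =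
      wedgeNorm 𝕜 (y ∘ j.succAbove ∘ i.succAbove) * wedgeNorm 𝕜 y /
        (wedgeNorm 𝕜 (y ∘ j.succAbove) * wedgeNorm 𝕜 (y ∘ (j.succAbove i).succAbove)) := by
  set ω := y ∘ j.succAbove ∘ i.succAbove
  have h₁ : (y ∘ j.succAbove) ∘ succAboveSumEquiv i = Sum.elim ω ![y (j.succAbove i)] :=
    comp_succAboveSumEquiv _ _
  have h₂ : (y ∘ (j.succAbove i).succAbove) ∘ succAboveSumEquiv (i.predAbove j) =
      Sum.elim ω ![y j] := by
    rw [comp_succAboveSumEquiv]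
    simp only [Function.comp_apply, Fin.succAbove_succAbove_predAbove]
    congr 1
    ext k
    simp [ω, Fin.succAbove_succAbove_succAbove_predAbove]
  have h₃ : y ∘ ((succAboveSumEquiv i).sumCongr (Equiv.refl _)).trans (succAboveSumEquiv j) =
      Sum.elim (Sum.elim ω ![y (j.succAbove i)]) ![y j] := by
    ext (k | k)
    · exact congrFun h₁ k
    · exact congrFun (comp_succAboveSumEquiv y j) (Sum.inr k)
  have hω : 0 ≤ RCLike.re (gramMatrix 𝕜 ω ω).det :=
    (RCLike.nonneg_iff.1 (det_gramMatrix_self_nonneg ω)).1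
  rw [pdistT, gramDet_eq_det_gramMatrix, gramDet_eq_det_gramMatrix, gramDet_eq_det_gramMatrix,
    ← det_gramMatrix_comp_equiv _ _ (succAboveSumEquiv i), h₁,
    ← det_gramMatrix_comp_equiv (y ∘ (j.succAbove i).succAbove) _ (succAboveSumEquiv (i.predAbove j)),
    h₂, ← norm_det_gramMatrix_comp_equiv _ _ (succAboveSumEquiv i)
      (succAboveSumEquiv (i.predAbove j)), h₁, h₂, det_gramMatrix_desnanot_jacobi,
    Real.sqrt_mul hω, ← h₃, det_gramMatrix_comp_equiv]
  rfl

theorem pdistT_comp_succAbove_le {p : ℕ} {y : Fin (p + 2) → E} (hy : ∀ q, y q ≠ 0)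
    {j : Fin (p + 2)} {i : Fin (p + 1)} (h₁ : AlmostOrthogonal 𝕜 (y ∘ j.succAbove))
    (h₂ : AlmostOrthogonal 𝕜 (y ∘ (j.succAbove i).succAbove)) :
    pdistT 𝕜 (y ∘ j.succAbove) (y ∘ (j.succAbove i).succAbove) ≤
      Real.exp 4 * wedgeNorm 𝕜 y / ∏ q, ‖y q‖ := by
  have hy₀ (q : Fin (p + 2)) : 0 < ‖y q‖ := norm_pos_iff.2 (hy q)
  have hP₁ : 0 < ∏ q, ‖(y ∘ j.succAbove) q‖ := Finset.prod_pos fun q _ => hy₀ _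
  have hP₂ : 0 < ∏ q, ‖(y ∘ (j.succAbove i).succAbove) q‖ := Finset.prod_pos fun q _ => hy₀ _
  have hX := mul_le_mul h₁.exp_neg_two_mul_prod_norm_le_wedgeNorm
    h₂.exp_neg_two_mul_prod_norm_le_wedgeNorm (by positivity) (Real.sqrt_nonneg _)
  have hω : wedgeNorm 𝕜 (y ∘ j.succAbove ∘ i.succAbove) * ∏ q, ‖y q‖ ≤
      Real.exp 4 * (wedgeNorm 𝕜 (y ∘ j.succAbove) * wedgeNorm 𝕜 (y ∘ (j.succAbove i).succAbove)) :=
    calc _ ≤ (∏ q, ‖(y ∘ j.succAbove ∘ i.succAbove) q‖) * ∏ q, ‖y q‖ := by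
          gcongr; exact wedgeNorm_le_prod_norm _
      _ = (∏ q, ‖(y ∘ j.succAbove) q‖) * ∏ q, ‖(y ∘ (j.succAbove i).succAbove) q‖ :=
          (Fin.prod_comp_succAbove_mul_prod (fun q => ‖y q‖) j i).symm
      _ = Real.exp 4 * ((Real.exp (-2) * ∏ q, ‖(y ∘ j.succAbove) q‖) *
            (Real.exp (-2) * ∏ q, ‖(y ∘ (j.succAbove i).succAbove) q‖)) := by
          rw [mul_mul_mul_comm, ← mul_assoc, ← Real.exp_add, ← Real.exp_add]; norm_num
      _ ≤ _ := by gcongr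
  have hwy : 0 ≤ wedgeNorm 𝕜 y := Real.sqrt_nonneg _
  rw [pdistT_comp_succAbove, div_le_div_iff₀ (hX.trans_lt' (by positivity))
    (Finset.prod_pos fun q _ => hy₀ q)]
  linarith [mul_le_mul_of_nonneg_left hω hwy]

end TwoOmitted

theorem stmt12_general {𝕜 : Type*} [RCLike 𝕜] {n m : ℕ}
    (y : Fin (m + 1) → EuclideanSpace 𝕜 (Fin n))
    (k l : Fin (m + 1)) (hkl : k < l)
    (hy : LinearIndependent 𝕜 y)
    (h₁ : AlmostOrthogonal 𝕜 (y ∘ l.succAbove))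
    (h₂ : AlmostOrthogonal 𝕜 (y ∘ k.succAbove)) :
    pdistT 𝕜 (y ∘ l.succAbove) (y ∘ k.succAbove) ≤
      Real.exp 4 * wedgeNorm 𝕜 y / ∏ i, ‖y i‖ := by
  obtain ⟨p, rfl⟩ : ∃ p, m = p + 1 := ⟨m - 1, by omega⟩
  obtain ⟨i, rfl⟩ := Fin.exists_succAbove_eq hkl.ne
  exact pdistT_comp_succAbove_le hy.ne_zero h₁ h₂

/-- let `1 ≤ k < ℓ ≤ m ≤ n` and let `y₁,…,yₘ` be linearly
independent in `Lⁿ` (`L = ℝ` or `ℂ`; here the tuple has length `m+1` with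
`0`-based indices `k < l`).  If both sequences obtained by omitting `y_ℓ`
resp. `y_k` are almost orthogonal, then the subspaces they span satisfy
`dist(V₁,V₂) ≤ e⁴·‖y₁ ∧ ⋯ ∧ yₘ‖/(‖y₁‖⋯‖yₘ‖)`, where `dist(V₁,V₂)` is
computed via these two bases. -/
theorem stmt12 {𝕜 : Type*} [RCLike 𝕜] {n m : ℕ} (hmn : m + 1 ≤ n)
    (y : Fin (m + 1) → EuclideanSpace 𝕜 (Fin n))
    (k l : Fin (m + 1)) (hkl : k < l)
    (hy : LinearIndependent 𝕜 y)
    (h₁ : AlmostOrthogonal 𝕜 (y ∘ l.succAbove))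
    (h₂ : AlmostOrthogonal 𝕜 (y ∘ k.succAbove)) :
    pdistT 𝕜 (y ∘ l.succAbove) (y ∘ k.succAbove) ≤
      Real.exp 4 * wedgeNorm 𝕜 y / ∏ i, ‖y i‖ :=
  stmt12_general y k l hkl hy h₁ h₂
end
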